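/- Let φ : [0,1] → [0,1] be continuously differentiable with Lipschitz constant L_φ and with φ′ Lipschitz with constant L_{φ′}, and let f ∈ C¹([0,1]). Then for every n ≥ 1, sup_{x∈[0,1]} |B_n(f∘φ;x) − f(φ(x))| ≤ (1/√n)·( L_φ · ω_{f′}(L_φ/(2√n)) + sup_{x∈[0,1]} |f′(φ(x))| · L_{φ′}/(2√n) ). -/

import Mathlib

/-!
Write `g = f ∘ φ`, so `g' = (f' ∘ φ) · φ'`. Bernstein operators reproduce affine functions, hence
`B_n g x - g x = ∑ₖ (g (k/n) - g x - g' x (k/n - x)) b_{n,k}(x)`, and by the mean value theorem the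
`k`-th term is at most `|k/n - x|` times the oscillation of `g'` between `x` and `k/n`. Since
`|φ'| ≤ L_φ`, subadditivity of the modulus of continuity bounds that oscillation by
`L_φ ω_{f'}(L_φ δ) (1 + |t - x|/δ) + sup |f' ∘ φ| · L_{φ'} |t - x|`. The first and second absolute
moments of the Bernstein weights are at most `1/(2√n)` (Cauchy–Schwarz) and `1/(4n)` (the variance
`x(1-x)/n`), and `δ = 1/(2√n)` balances the two contributions of `ω_{f'}`.
-/

noncomputable def bern (n k : ℕ) (x : ℝ) : ℝ :=
  (n.choose k : ℝ) * x ^ k * (1 - x) ^ (n - k)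

noncomputable def bernOp (n : ℕ) (f : ℝ → ℝ) (x : ℝ) : ℝ :=
  ∑ k ∈ Finset.range (n + 1), f ((k : ℝ) / (n : ℝ)) * bern n k x

noncomputable def modCont (f : ℝ → ℝ) (δ : ℝ) : ℝ :=
  sSup {r : ℝ | ∃ x ∈ Set.Icc (0 : ℝ) 1, ∃ y ∈ Set.Icc (0 : ℝ) 1, |x - y| ≤ δ ∧ r = |f x - f y|}

open Set Finset

lemma bern_eq_eval (n k : ℕ) (x : ℝ) : bern n k x = (bernsteinPolynomial ℝ n k).eval x := by
  simp [bern, bernsteinPolynomial]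

lemma bern_nonneg (n k : ℕ) {x : ℝ} (hx : x ∈ Icc (0 : ℝ) 1) : 0 ≤ bern n k x :=
  mul_nonneg (mul_nonneg (by positivity) (pow_nonneg hx.1 _)) (pow_nonneg (sub_nonneg.2 hx.2) _)

lemma sum_bern (n : ℕ) (x : ℝ) : ∑ k ∈ range (n + 1), bern n k x = 1 := by
  simpa [bern_eq_eval, Polynomial.eval_finsetSum] using
    congrArg (Polynomial.eval x) (bernsteinPolynomial.sum ℝ n)

lemma sum_sub_mul_bern {n : ℕ} (hn : n ≠ 0) (x : ℝ) :
    ∑ k ∈ range (n + 1), ((k : ℝ) / n - x) * bern n k x = 0 := by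
  have hmean : ∑ k ∈ range (n + 1), (k : ℝ) * bern n k x = n * x := by
    simpa [bern_eq_eval, Polynomial.eval_finsetSum] using
      congrArg (Polynomial.eval x) (bernsteinPolynomial.sum_smul ℝ n)
  simp only [sub_mul, Finset.sum_sub_distrib, div_mul_eq_mul_div, ← Finset.sum_div,
    ← Finset.mul_sum, hmean, sum_bern]
  field_simp
  ring

lemma sum_sq_sub_mul_bern {n : ℕ} (hn : n ≠ 0) (x : ℝ) :
    ∑ k ∈ range (n + 1), ((k : ℝ) / n - x) ^ 2 * bern n k x = x * (1 - x) / n := by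
  have hvar : ∑ k ∈ range (n + 1), ((n : ℝ) * x - k) ^ 2 * bern n k x = n * x * (1 - x) := by
    simpa [bern_eq_eval, Polynomial.eval_finsetSum] using
      congrArg (Polynomial.eval x) (bernsteinPolynomial.variance ℝ n)
  calc _ = (∑ k ∈ range (n + 1), ((n : ℝ) * x - k) ^ 2 * bern n k x) / n ^ 2 := by
        rw [Finset.sum_div]
        refine sum_congr rfl fun k _ => ?_
        field_simp
        ring
    _ = _ := by
        rw [hvar]
        field_simp

lemma sum_sq_sub_mul_bern_le {n : ℕ} (hn : n ≠ 0) (x : ℝ) :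
    ∑ k ∈ range (n + 1), ((k : ℝ) / n - x) ^ 2 * bern n k x ≤ 1 / (4 * n) := by
  rw [sum_sq_sub_mul_bern hn, div_le_div_iff₀ (by positivity) (by positivity)]
  nlinarith [mul_nonneg (sq_nonneg (2 * x - 1)) (Nat.cast_nonneg (α := ℝ) n)]

lemma sum_abs_sub_mul_bern_le {n : ℕ} (hn : n ≠ 0) {x : ℝ} (hx : x ∈ Icc (0 : ℝ) 1) :
    ∑ k ∈ range (n + 1), |(k : ℝ) / n - x| * bern n k x ≤ 1 / (2 * √n) := by
  have hcs := sum_sq_le_sum_mul_sum_of_sq_le_mul (range (n + 1))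
    (r := fun k ↦ |(k : ℝ) / n - x| * bern n k x) (f := fun k ↦ bern n k x)
    (g := fun k ↦ ((k : ℝ) / n - x) ^ 2 * bern n k x)
    (fun k _ ↦ bern_nonneg n k hx) (fun k _ ↦ mul_nonneg (sq_nonneg _) (bern_nonneg n k hx))
    (fun k _ ↦ le_of_eq (by rw [mul_pow, sq_abs]; ring))
  rw [sum_bern, one_mul] at hcs
  rw [← pow_le_pow_iff_left₀ (sum_nonneg fun k _ ↦ mul_nonneg (abs_nonneg _) (bern_nonneg n k hx))
    (by positivity) two_ne_zero, div_pow, mul_pow, Real.sq_sqrt (Nat.cast_nonneg n)]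
  linarith [sum_sq_sub_mul_bern_le hn x]

lemma bernOp_sub_eq_sum {n : ℕ} (hn : n ≠ 0) (g : ℝ → ℝ) (c x : ℝ) :
    bernOp n g x - g x =
      ∑ k ∈ range (n + 1), (g (k / n) - g x - c * (k / n - x)) * bern n k x := by
  have hsplit : ∀ k ∈ range (n + 1), (g (k / n) - g x - c * (k / n - x)) * bern n k x
      = g (k / n) * bern n k x - g x * bern n k x - c * ((k / n - x) * bern n k x) :=
    fun _ _ ↦ by ring
  rw [sum_congr rfl hsplit, sum_sub_distrib, sum_sub_distrib, ← mul_sum, ← mul_sum, sum_bern,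
    sum_sub_mul_bern hn, bernOp]
  ring

lemma abs_sub_sub_mul_le_of_hasDerivWithinAt {g g' : ℝ → ℝ} {s : Set ℝ} (hs : s.OrdConnected)
    (hg : ∀ y ∈ s, HasDerivWithinAt g (g' y) s y) {x t C : ℝ} (hx : x ∈ s) (ht : t ∈ s)
    (hC : ∀ y ∈ uIcc x t, |g' y - g' x| ≤ C) :
    |g t - g x - g' x * (t - x)| ≤ C * |t - x| := by
  have hsub : uIcc x t ⊆ s := hs.uIcc_subset hx ht
  have hderiv : ∀ y ∈ uIcc x t,
      HasDerivWithinAt (fun u ↦ g u - g' x * u) (g' y - g' x) (uIcc x t) y := fun y hy ↦ by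
    have h := ((hg y (hsub hy)).mono hsub).sub ((hasDerivWithinAt_id y _).const_mul (g' x))
    rwa [mul_one] at h
  have hmvt := (convex_uIcc x t).norm_image_sub_le_of_norm_hasDerivWithin_le hderiv
    (fun y hy ↦ by simpa only [Real.norm_eq_abs] using hC y hy) left_mem_uIcc right_mem_uIcc
  simp only [Real.norm_eq_abs] at hmvt
  calc |g t - g x - g' x * (t - x)| = |g t - g' x * t - (g x - g' x * x)| := by ring_nf
    _ ≤ C * |t - x| := hmvt

theorem abs_bernOp_sub_le {g g' : ℝ → ℝ}
    (hg : ∀ y ∈ Icc (0 : ℝ) 1, HasDerivWithinAt g (g' y) (Icc 0 1) y) {A B : ℝ} (hB : 0 ≤ B)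
    (hg' : ∀ x ∈ Icc (0 : ℝ) 1, ∀ y ∈ Icc (0 : ℝ) 1, |g' y - g' x| ≤ A + B * |y - x|)
    {n : ℕ} (hn : n ≠ 0) {x : ℝ} (hx : x ∈ Icc (0 : ℝ) 1) :
    |bernOp n g x - g x| ≤ A / (2 * √n) + B / (4 * n) := by
  have hA : 0 ≤ A := by simpa using hg' x hx x hx
  have hnode : ∀ k ∈ range (n + 1), (k : ℝ) / n ∈ Icc (0 : ℝ) 1 := fun k hk ↦
    ⟨by positivity, div_le_one_of_le₀ (by exact_mod_cast Nat.lt_succ_iff.mp (mem_range.mp hk))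
      (Nat.cast_nonneg n)⟩
  have hterm : ∀ k ∈ range (n + 1),
      |(g (k / n) - g x - g' x * (k / n - x)) * bern n k x|
        ≤ A * (|(k : ℝ) / n - x| * bern n k x) + B * (((k : ℝ) / n - x) ^ 2 * bern n k x) := by
    intro k hk
    have hrem := abs_sub_sub_mul_le_of_hasDerivWithinAt ordConnected_Icc hg hx (hnode k hk)
      (C := A + B * |(k : ℝ) / n - x|) fun y hy ↦
        (hg' x hx y (ordConnected_Icc.uIcc_subset hx (hnode k hk) hy)).trans
          (by gcongr A + B * ?_; exact abs_sub_left_of_mem_uIcc hy)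
    rw [abs_mul, abs_of_nonneg (bern_nonneg n k hx)]
    calc _ ≤ (A + B * |(k : ℝ) / n - x|) * |(k : ℝ) / n - x| * bern n k x := by
          gcongr
          exact bern_nonneg n k hx
      _ = _ := by rw [← sq_abs]; ring
  calc |bernOp n g x - g x|
      = |∑ k ∈ range (n + 1), (g (k / n) - g x - g' x * (k / n - x)) * bern n k x| := by
        rw [bernOp_sub_eq_sum hn g (g' x) x]
    _ ≤ ∑ k ∈ range (n + 1), |(g (k / n) - g x - g' x * (k / n - x)) * bern n k x| :=
        abs_sum_le_sum_abs _ _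
    _ ≤ A * ∑ k ∈ range (n + 1), |(k : ℝ) / n - x| * bern n k x
          + B * ∑ k ∈ range (n + 1), ((k : ℝ) / n - x) ^ 2 * bern n k x := by
        rw [mul_sum, mul_sum, ← sum_add_distrib]
        exact sum_le_sum hterm
    _ ≤ A * (1 / (2 * √n)) + B * (1 / (4 * n)) := by
        gcongr
        exacts [sum_abs_sub_mul_bern_le hn hx, sum_sq_sub_mul_bern_le hn x]
    _ = A / (2 * √n) + B / (4 * n) := by ring

lemma bddAbove_modCont_set {g : ℝ → ℝ} (hg : ContinuousOn g (Icc 0 1)) (δ : ℝ) :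
    BddAbove {r : ℝ | ∃ x ∈ Icc (0 : ℝ) 1, ∃ y ∈ Icc (0 : ℝ) 1, |x - y| ≤ δ ∧ r = |g x - g y|} := by
  obtain ⟨C, hC⟩ := isCompact_Icc.exists_bound_of_continuousOn hg
  refine ⟨C + C, ?_⟩
  rintro r ⟨x, hx, y, hy, -, rfl⟩
  exact (abs_sub _ _).trans (add_le_add (hC x hx) (hC y hy))

lemma abs_sub_le_modCont {g : ℝ → ℝ} (hg : ContinuousOn g (Icc 0 1)) {δ a b : ℝ}
    (ha : a ∈ Icc (0 : ℝ) 1) (hb : b ∈ Icc (0 : ℝ) 1) (hab : |a - b| ≤ δ) :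
    |g a - g b| ≤ modCont g δ :=
  le_csSup (bddAbove_modCont_set hg δ) ⟨a, ha, b, hb, hab, rfl⟩

lemma modCont_nonneg {g : ℝ → ℝ} (hg : ContinuousOn g (Icc 0 1)) {δ : ℝ} (hδ : 0 ≤ δ) :
    0 ≤ modCont g δ := by
  simpa using abs_sub_le_modCont hg (left_mem_Icc.2 zero_le_one) (left_mem_Icc.2 zero_le_one)
    (by simpa using hδ)

lemma abs_sub_le_nat_mul_modCont {g : ℝ → ℝ} (hg : ContinuousOn g (Icc 0 1)) {δ a b : ℝ}
    {m : ℕ} (hm : m ≠ 0) (ha : a ∈ Icc (0 : ℝ) 1) (hb : b ∈ Icc (0 : ℝ) 1)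
    (hab : |a - b| ≤ m * δ) : |g a - g b| ≤ m * modCont g δ := by
  have hm' : (m : ℝ) ≠ 0 := by exact_mod_cast hm
  set p : ℕ → ℝ := fun i ↦ a + (i / m : ℝ) • (b - a)
  have hp : ∀ i ≤ m, p i ∈ Icc (0 : ℝ) 1 := fun i hi ↦
    (convex_Icc 0 1).add_smul_sub_mem ha hb
      ⟨by positivity, div_le_one_of_le₀ (by exact_mod_cast hi) (Nat.cast_nonneg m)⟩
  have hstep : ∀ i < m, |g (p (i + 1)) - g (p i)| ≤ modCont g δ := fun i hi ↦ by
    refine abs_sub_le_modCont hg (hp _ hi) (hp _ hi.le) ?_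
    have hdiff : p (i + 1) - p i = (b - a) / m := by
      simp only [p, smul_eq_mul]
      push_cast
      field_simp
      ring
    rwa [hdiff, abs_div, Nat.abs_cast, div_le_iff₀ (by positivity), mul_comm, abs_sub_comm]
  have hp0 : p 0 = a := by simp [p]
  have hpm : p m = b := by simp [p, hm']
  calc |g a - g b| = |∑ i ∈ range m, (g (p (i + 1)) - g (p i))| := by
        rw [sum_range_sub (fun i ↦ g (p i)), hp0, hpm, abs_sub_comm]
    _ ≤ ∑ i ∈ range m, |g (p (i + 1)) - g (p i)| := abs_sum_le_sum_abs _ _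
    _ ≤ ∑ _i ∈ range m, modCont g δ := sum_le_sum fun i hi ↦ hstep i (mem_range.1 hi)
    _ = m * modCont g δ := by simp

lemma abs_sub_le_one_add_mul_modCont {g : ℝ → ℝ} (hg : ContinuousOn g (Icc 0 1)) {δ d a b : ℝ}
    (hδ : 0 ≤ δ) (hd : 0 ≤ d) (ha : a ∈ Icc (0 : ℝ) 1) (hb : b ∈ Icc (0 : ℝ) 1)
    (hab : |a - b| ≤ d * δ) : |g a - g b| ≤ (1 + d) * modCont g δ := by
  have hfloor : d < (⌊d⌋₊ + 1 : ℕ) := by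
    push_cast
    exact Nat.lt_floor_add_one d
  calc |g a - g b| ≤ (⌊d⌋₊ + 1 : ℕ) * modCont g δ :=
        abs_sub_le_nat_mul_modCont hg (Nat.succ_ne_zero _) ha hb
          (hab.trans (by gcongr))
    _ ≤ (1 + d) * modCont g δ := by
        gcongr
        · exact modCont_nonneg hg hδ
        · push_cast
          linarith [Nat.floor_le hd]

lemma abs_le_of_hasDerivWithinAt_of_abs_sub_le {φ : ℝ → ℝ} {s : Set ℝ} {x d L : ℝ}
    (hφ : HasDerivWithinAt φ d s x) (hs : UniqueDiffWithinAt ℝ s x)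
    (hL : ∀ y ∈ s, |φ y - φ x| ≤ L * |y - x|) : |d| ≤ L := by
  have := accPt_principal_iff_nhdsWithin.mp hs.accPt
  refine le_of_tendsto (hasDerivWithinAt_iff_tendsto_slope.mp hφ).abs ?_
  filter_upwards [self_mem_nhdsWithin] with y ⟨hys, hyx⟩
  rw [slope_def_field, abs_div, div_le_iff₀ (abs_pos.2 (sub_ne_zero.2 hyx))]
  exact hL y hys

lemma nonneg_of_abs_sub_le_mul_abs_sub {h : ℝ → ℝ} {L : ℝ}
    (hL : ∀ x ∈ Icc (0 : ℝ) 1, ∀ y ∈ Icc (0 : ℝ) 1, |h x - h y| ≤ L * |x - y|) : 0 ≤ L := by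
  simpa using
    (abs_nonneg _).trans (hL 1 (right_mem_Icc.2 zero_le_one) 0 (left_mem_Icc.2 zero_le_one))

lemma abs_comp_le_iSup {φ h : ℝ → ℝ} (hφmap : MapsTo φ (Icc 0 1) (Icc 0 1))
    (hh : ContinuousOn h (Icc 0 1)) {x : ℝ} (hx : x ∈ Icc (0 : ℝ) 1) :
    |h (φ x)| ≤ ⨆ z : Icc (0 : ℝ) 1, |h (φ z)| := by
  obtain ⟨C, hC⟩ := isCompact_Icc.exists_bound_of_continuousOn hh
  exact le_ciSup (f := fun z : Icc (0 : ℝ) 1 ↦ |h (φ z)|)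
    ⟨C, by rintro _ ⟨z, rfl⟩; exact hC _ (hφmap z.2)⟩ ⟨x, hx⟩

lemma abs_comp_mul_deriv_sub_le {φ φ' f' : ℝ → ℝ} {Lφ Lφ' M c : ℝ}
    (hφmap : MapsTo φ (Icc 0 1) (Icc 0 1)) (hf' : ContinuousOn f' (Icc 0 1))
    (hLφ : ∀ x ∈ Icc (0 : ℝ) 1, ∀ y ∈ Icc (0 : ℝ) 1, |φ x - φ y| ≤ Lφ * |x - y|)
    (hLφ' : ∀ x ∈ Icc (0 : ℝ) 1, ∀ y ∈ Icc (0 : ℝ) 1, |φ' x - φ' y| ≤ Lφ' * |x - y|)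
    (hφ' : ∀ x ∈ Icc (0 : ℝ) 1, |φ' x| ≤ Lφ) (hM : ∀ x ∈ Icc (0 : ℝ) 1, |f' (φ x)| ≤ M)
    (hc : 0 < c) {x y : ℝ} (hx : x ∈ Icc (0 : ℝ) 1) (hy : y ∈ Icc (0 : ℝ) 1) :
    |f' (φ y) * φ' y - f' (φ x) * φ' x|
      ≤ Lφ * modCont f' (Lφ / c) + (Lφ * modCont f' (Lφ / c) * c + M * Lφ') * |y - x| := by
  have hLφ0 : 0 ≤ Lφ := (abs_nonneg _).trans (hφ' x hx)
  have hω0 : 0 ≤ modCont f' (Lφ / c) := modCont_nonneg hf' (by positivity)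
  have hM0 : 0 ≤ M := (abs_nonneg _).trans (hM x hx)
  have hf'φ : |f' (φ y) - f' (φ x)| ≤ (1 + c * |y - x|) * modCont f' (Lφ / c) :=
    abs_sub_le_one_add_mul_modCont hf' (by positivity) (by positivity) (hφmap hy) (hφmap hx)
      (by
        calc |φ y - φ x| ≤ Lφ * |y - x| := hLφ y hy x hx
          _ = c * |y - x| * (Lφ / c) := by field_simp)
  calc |f' (φ y) * φ' y - f' (φ x) * φ' x|
      = |(f' (φ y) - f' (φ x)) * φ' y + f' (φ x) * (φ' y - φ' x)| := by ring_nf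
    _ ≤ |f' (φ y) - f' (φ x)| * |φ' y| + |f' (φ x)| * |φ' y - φ' x| := by
        rw [← abs_mul, ← abs_mul]
        exact abs_add_le _ _
    _ ≤ (1 + c * |y - x|) * modCont f' (Lφ / c) * Lφ + M * (Lφ' * |y - x|) :=
        add_le_add (mul_le_mul hf'φ (hφ' y hy) (abs_nonneg _) (by positivity))
          (mul_le_mul (hM x hx) (hLφ' y hy x hx) (abs_nonneg _) hM0)
    _ = _ := by ring

theorem stmt13_general (φ φ' f f' : ℝ → ℝ)
    (hφmap : Set.MapsTo φ (Set.Icc (0 : ℝ) 1) (Set.Icc (0 : ℝ) 1))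
    (hφderiv : ∀ x ∈ Set.Icc (0 : ℝ) 1, HasDerivWithinAt φ (φ' x) (Set.Icc (0 : ℝ) 1) x)
    (hfderiv : ∀ x ∈ Set.Icc (0 : ℝ) 1, HasDerivWithinAt f (f' x) (Set.Icc (0 : ℝ) 1) x)
    (hf' : ContinuousOn f' (Set.Icc (0 : ℝ) 1))
    (Lφ Lφ' : ℝ)
    (hLφ : ∀ x ∈ Set.Icc (0 : ℝ) 1, ∀ y ∈ Set.Icc (0 : ℝ) 1,
      |φ x - φ y| ≤ Lφ * |x - y|)
    (hLφ' : ∀ x ∈ Set.Icc (0 : ℝ) 1, ∀ y ∈ Set.Icc (0 : ℝ) 1,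
      |φ' x - φ' y| ≤ Lφ' * |x - y|)
    (n : ℕ) (hn : 1 ≤ n) :
    (⨆ x : Set.Icc (0 : ℝ) 1, |bernOp n (f ∘ φ) x - f (φ x)|)
      ≤ (1 / Real.sqrt n) * (Lφ * modCont f' (Lφ / (2 * Real.sqrt n))
          + (⨆ x : Set.Icc (0 : ℝ) 1, |f' (φ x)|) * (Lφ' / (2 * Real.sqrt n))) := by
  set M := ⨆ x : Icc (0 : ℝ) 1, |f' (φ x)|
  have hM : ∀ x ∈ Icc (0 : ℝ) 1, |f' (φ x)| ≤ M := fun x hx ↦ abs_comp_le_iSup hφmap hf' hx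
  have hφ' : ∀ x ∈ Icc (0 : ℝ) 1, |φ' x| ≤ Lφ := fun x hx ↦
    abs_le_of_hasDerivWithinAt_of_abs_sub_le (hφderiv x hx) (uniqueDiffOn_Icc_zero_one x hx)
      fun y hy ↦ hLφ y hy x hx
  have hcomp : ∀ x ∈ Icc (0 : ℝ) 1,
      HasDerivWithinAt (f ∘ φ) (f' (φ x) * φ' x) (Icc 0 1) x := fun x hx ↦
    (hfderiv _ (hφmap hx)).comp x (hφderiv x hx) hφmap
  set r := √(n : ℝ)
  have hr : 0 < r := by positivity
  have hn_sq : (n : ℝ) = r ^ 2 := (Real.sq_sqrt (Nat.cast_nonneg n)).symm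
  set ω := modCont f' (Lφ / (2 * r))
  have hLφ0 := nonneg_of_abs_sub_le_mul_abs_sub hLφ
  have hLφ'0 := nonneg_of_abs_sub_le_mul_abs_sub hLφ'
  have hM0 : 0 ≤ M := (abs_nonneg _).trans (hM 0 (left_mem_Icc.2 zero_le_one))
  have hω0 : 0 ≤ ω := modCont_nonneg hf' (by positivity)
  refine ciSup_le fun x ↦ (abs_bernOp_sub_le hcomp (by positivity)
    (fun x hx y hy ↦ abs_comp_mul_deriv_sub_le hφmap hf' hLφ hLφ' hφ' hM (by positivity) hx hy)
    (by omega) x.2).trans (le_of_sub_nonneg ?_)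
  have hgap : 1 / r * (Lφ * ω + M * (Lφ' / (2 * r)))
      - (Lφ * ω / (2 * r) + (Lφ * ω * (2 * r) + M * Lφ') / (4 * n)) = M * Lφ' / (4 * r ^ 2) := by
    rw [hn_sq]
    field_simp
    ring
  rw [hgap]
  positivity

theorem stmt13 (φ φ' f f' : ℝ → ℝ)
    (hφmap : Set.MapsTo φ (Set.Icc (0 : ℝ) 1) (Set.Icc (0 : ℝ) 1))
    (hφderiv : ∀ x ∈ Set.Icc (0 : ℝ) 1, HasDerivWithinAt φ (φ' x) (Set.Icc (0 : ℝ) 1) x)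
    (hφ' : ContinuousOn φ' (Set.Icc (0 : ℝ) 1))
    (hfderiv : ∀ x ∈ Set.Icc (0 : ℝ) 1, HasDerivWithinAt f (f' x) (Set.Icc (0 : ℝ) 1) x)
    (hf' : ContinuousOn f' (Set.Icc (0 : ℝ) 1))
    (Lφ Lφ' : ℝ)
    (hLφ : ∀ x ∈ Set.Icc (0 : ℝ) 1, ∀ y ∈ Set.Icc (0 : ℝ) 1,
      |φ x - φ y| ≤ Lφ * |x - y|)
    (hLφ' : ∀ x ∈ Set.Icc (0 : ℝ) 1, ∀ y ∈ Set.Icc (0 : ℝ) 1,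
      |φ' x - φ' y| ≤ Lφ' * |x - y|)
    (n : ℕ) (hn : 1 ≤ n) :
    (⨆ x : Set.Icc (0 : ℝ) 1, |bernOp n (f ∘ φ) x - f (φ x)|)
      ≤ (1 / Real.sqrt n) * (Lφ * modCont f' (Lφ / (2 * Real.sqrt n))
          + (⨆ x : Set.Icc (0 : ℝ) 1, |f' (φ x)|) * (Lφ' / (2 * Real.sqrt n))) :=
  stmt13_general φ φ' f f' hφmap hφderiv hfderiv hf' Lφ Lφ' hLφ hLφ' n hn
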